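/- arXiv:0708.3073 — 3 statements merged into one kernel-verified Lean document; each statement's English description precedes it below -/
import Mathlib

section
/- For the single-node fluid dynamics, if x(t) = 0 on an interval where the derivative exists, then the outflow derivative equals the inflow derivative: at almost every t with x(t) = 0 and y(t) = Y'(t) ≤ γ, one has Z'(t) = y(t); at almost every t with x(t) > 0, one has Z'(t) = γ. -/
/-!
Since `Z(s) = γ s - U(s)` and, for `0 ≤ t ≤ s`, `U(s) = max (U(t), -inf_{[t,s]} V)`, the right
derivative of `Z` at `t` can be read off from `V` near `t`, and it determines `Z'(t)`.
If `x(t) > 0`, then `V > -U(t)` just right of `t`, so `U` stays constant there and `Z' = γ`.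
If `x(t) = 0`, then `U(t) = -V(t)` and `Z(s) = γ s + inf_{[t,s]} V`; the running infimum of a
function whose derivative `V'(t) = y - γ` is nonpositive has right derivative `V'(t)`, so `Z' = y`.
-/

open Real

/-- Virtual level `V(t) = x₀ + Y(t) − γ t` of a single fluid node. -/
noncomputable def Vfun (x₀ γ : ℝ) (Y : ℝ → ℝ) : ℝ → ℝ := fun t => x₀ + Y t - γ * t

/-- Unused service capacity `U(t) = max {0, −inf_{[0,t]} V}`. -/
noncomputable def Ufun (x₀ γ : ℝ) (Y : ℝ → ℝ) : ℝ → ℝ := fun t =>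
  max 0 (-(sInf (Vfun x₀ γ Y '' Set.Icc 0 t)))

/-- The fluid level `x(t) = W(γ,x₀,Y)(t) = V(t) + U(t)`. -/
noncomputable def Wfun (x₀ γ : ℝ) (Y : ℝ → ℝ) : ℝ → ℝ := fun t =>
  Vfun x₀ γ Y t + Ufun x₀ γ Y t

/-- Net outflow `Z(t) = x₀ + Y(t) − x(t)` of the single fluid node. -/
noncomputable def Zfun (x₀ γ : ℝ) (Y : ℝ → ℝ) : ℝ → ℝ := fun t =>
  x₀ + Y t - Wfun x₀ γ Y t

open Set Filter Topology

theorem Filter.Eventually.forall_Icc_nhdsGE {p : ℝ → Prop} {t : ℝ} (h : ∀ᶠ r in 𝓝[≥] t, p r) :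
    ∀ᶠ s in 𝓝[≥] t, ∀ r ∈ Icc t s, p r := by
  obtain ⟨u, htu, hsub⟩ := mem_nhdsGE_iff_exists_Ico_subset.mp h
  filter_upwards [Ico_mem_nhdsGE htu] with s hs r hr
  exact hsub ⟨hr.1, hr.2.trans_lt hs.2⟩

theorem sInf_image_Icc_eq_min {f : ℝ → ℝ} {a b c : ℝ} (hf : ContinuousOn f (Icc a c))
    (hab : a ≤ b) (hbc : b ≤ c) :
    sInf (f '' Icc a c) = min (sInf (f '' Icc a b)) (sInf (f '' Icc b c)) := by
  have hbdd : BddBelow (f '' Icc a c) := (isCompact_Icc.image_of_continuousOn hf).bddBelow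
  rw [← Icc_union_Icc_eq_Icc hab hbc, image_union]
  exact csInf_union (hbdd.mono (image_mono (Icc_subset_Icc_right hbc)))
    ((nonempty_Icc.mpr hab).image f) (hbdd.mono (image_mono (Icc_subset_Icc_left hab)))
    ((nonempty_Icc.mpr hbc).image f)

theorem HasDerivWithinAt.sInf_image_Icc {f : ℝ → ℝ} {t v : ℝ}
    (hf : HasDerivWithinAt f v (Ici t) t) (hv : v ≤ 0) :
    HasDerivWithinAt (fun s => sInf (f '' Icc t s)) v (Ici t) t := by
  rw [hasDerivWithinAt_iff_isLittleO, Asymptotics.isLittleO_iff]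
  intro ε hε
  have hf' := (hasDerivWithinAt_iff_isLittleO.mp hf).def hε
  filter_upwards [hf'.forall_Icc_nhdsGE, self_mem_nhdsWithin] with s hs (hts : t ≤ s)
  -- `v - ε ≤ 0` lets the lower bound at `r ≤ s` be taken uniform, namely the one at `s`.
  have hbound : ∀ r ∈ Icc t s,
      f t + (v - ε) * (s - t) ≤ f r ∧ f r ≤ f t + (v + ε) * (r - t) := by
    intro r hr
    have h := hs r hr
    simp only [Real.norm_eq_abs, smul_eq_mul, abs_of_nonneg (sub_nonneg.mpr hr.1)] at h
    obtain ⟨h₁, h₂⟩ := abs_le.mp h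
    constructor
    · nlinarith [hr.2]
    · linarith
  have hlower : f t + (v - ε) * (s - t) ≤ sInf (f '' Icc t s) :=
    le_csInf ((nonempty_Icc.mpr hts).image f) (forall_mem_image.mpr fun r hr => (hbound r hr).1)
  have hupper : sInf (f '' Icc t s) ≤ f s :=
    csInf_le ⟨_, forall_mem_image.mpr fun r hr => (hbound r hr).1⟩
      (mem_image_of_mem f ⟨hts, le_rfl⟩)
  have hfs := (hbound s ⟨hts, le_rfl⟩).2
  simp only [Icc_self, image_singleton, csInf_singleton, Real.norm_eq_abs, smul_eq_mul,
    abs_of_nonneg (sub_nonneg.mpr hts)]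
  rw [abs_le]
  constructor <;> nlinarith

section FluidNode

variable {x₀ γ : ℝ} {Y : ℝ → ℝ}

theorem continuous_Vfun (hY : Continuous Y) : Continuous (Vfun x₀ γ Y) := by
  unfold Vfun; fun_prop

theorem Zfun_eq_sub_Ufun (s : ℝ) : Zfun x₀ γ Y s = γ * s - Ufun x₀ γ Y s := by
  simp only [Zfun, Wfun, Vfun]; ring

theorem Ufun_eq_max_of_le (hY : Continuous Y) {t s : ℝ} (ht : 0 ≤ t) (hts : t ≤ s) :
    Ufun x₀ γ Y s = max (Ufun x₀ γ Y t) (-sInf (Vfun x₀ γ Y '' Icc t s)) := by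
  simp only [Ufun]
  rw [sInf_image_Icc_eq_min (continuous_Vfun hY).continuousOn ht hts, ← max_neg_neg, max_assoc]

theorem Zfun_eq_of_Wfun_eq_zero (hY : Continuous Y) {t s : ℝ} (ht : 0 ≤ t)
    (hW : Wfun x₀ γ Y t = 0) (hts : t ≤ s) :
    Zfun x₀ γ Y s = γ * s + sInf (Vfun x₀ γ Y '' Icc t s) := by
  have hU : Ufun x₀ γ Y t = -Vfun x₀ γ Y t := by rw [Wfun] at hW; linarith
  have hinf : sInf (Vfun x₀ γ Y '' Icc t s) ≤ Vfun x₀ γ Y t :=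
    csInf_le ((isCompact_Icc.image (continuous_Vfun hY)).bddBelow)
      (mem_image_of_mem _ ⟨le_rfl, hts⟩)
  rw [Zfun_eq_sub_Ufun, Ufun_eq_max_of_le hY ht hts, hU, max_eq_right (neg_le_neg hinf)]
  ring

theorem Zfun_eventuallyEq_of_Wfun_pos (hY : Continuous Y) {t : ℝ} (ht : 0 ≤ t)
    (hW : 0 < Wfun x₀ γ Y t) :
    Zfun x₀ γ Y =ᶠ[𝓝[≥] t] fun s => γ * s - Ufun x₀ γ Y t := by
  have hVt : -Ufun x₀ γ Y t < Vfun x₀ γ Y t := by rw [Wfun] at hW; linarith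
  have hV : ∀ᶠ r in 𝓝[≥] t, -Ufun x₀ γ Y t < Vfun x₀ γ Y r :=
    ((continuous_Vfun hY).continuousAt.eventually (lt_mem_nhds hVt)).filter_mono
      nhdsWithin_le_nhds
  filter_upwards [hV.forall_Icc_nhdsGE, self_mem_nhdsWithin] with s hs (hts : t ≤ s)
  have hinf : -Ufun x₀ γ Y t ≤ sInf (Vfun x₀ γ Y '' Icc t s) :=
    le_csInf ((nonempty_Icc.mpr hts).image _) (forall_mem_image.mpr fun r hr => (hs r hr).le)
  rw [Zfun_eq_sub_Ufun, Ufun_eq_max_of_le hY ht hts, max_eq_left (neg_le.mpr hinf)]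

end FluidNode

theorem stmt8_general (γ x₀ : ℝ) (Y : ℝ → ℝ) (K : NNReal)
    (hLip : LipschitzWith K Y) :
    (∀ t : ℝ, 0 < t → ∀ yv zv : ℝ,
      Wfun x₀ γ Y t = 0 → HasDerivAt Y yv t → yv ≤ γ →
      HasDerivAt (Zfun x₀ γ Y) zv t → zv = yv) ∧
    (∀ t : ℝ, 0 < t → ∀ zv : ℝ,
      0 < Wfun x₀ γ Y t →
      HasDerivAt (Zfun x₀ γ Y) zv t → zv = γ) := by
  have hY := hLip.continuous
  refine ⟨fun t ht yv zv hW hYd hyv hZ => ?_, fun t ht zv hW hZ => ?_⟩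
  · have hV : HasDerivAt (Vfun x₀ γ Y) (yv - γ) t :=
      ((hYd.const_add x₀).sub ((hasDerivAt_id t).const_mul γ)).congr_deriv (by ring)
    have hinf := hV.hasDerivWithinAt.sInf_image_Icc (by linarith)
    have hright : HasDerivWithinAt (Zfun x₀ γ Y) yv (Ici t) t :=
      (((hasDerivAt_id t).const_mul γ).hasDerivWithinAt.add hinf).congr_deriv (by ring)
        |>.congr (fun s hs => Zfun_eq_of_Wfun_eq_zero hY ht.le hW hs)
          (Zfun_eq_of_Wfun_eq_zero hY ht.le hW le_rfl)
    exact (uniqueDiffWithinAt_Ici t).eq_deriv _ hZ.hasDerivWithinAt hright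
  · have hright : HasDerivWithinAt (Zfun x₀ γ Y) γ (Ici t) t :=
      (((hasDerivAt_id t).const_mul γ).sub_const (Ufun x₀ γ Y t)).hasDerivWithinAt
        |>.congr_deriv (mul_one γ) |>.congr_of_eventuallyEq
        (Zfun_eventuallyEq_of_Wfun_pos hY ht.le hW) (Zfun_eq_sub_Ufun t)
    exact (uniqueDiffWithinAt_Ici t).eq_deriv _ hZ.hasDerivWithinAt hright

/-- Single-node fluid dynamics, work-conservation at the level of derivatives:
where the derivatives exist, if `x(t) = 0` and `Y'(t) ≤ γ` then `Z'(t) = Y'(t)`,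
while if `x(t) > 0` then `Z'(t) = γ`. -/
theorem stmt8 (γ x₀ : ℝ) (Y : ℝ → ℝ) (K : NNReal)
    (hγ : 0 < γ) (hx₀ : 0 ≤ x₀)
    (hmono : MonotoneOn Y (Set.Ici 0)) (hLip : LipschitzWith K Y) (hY0 : Y 0 = 0) :
    (∀ t : ℝ, 0 < t → ∀ yv zv : ℝ,
      Wfun x₀ γ Y t = 0 → HasDerivAt Y yv t → yv ≤ γ →
      HasDerivAt (Zfun x₀ γ Y) zv t → zv = yv) ∧
    (∀ t : ℝ, 0 < t → ∀ zv : ℝ,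
      0 < Wfun x₀ γ Y t →
      HasDerivAt (Zfun x₀ γ Y) zv t → zv = γ) :=
  stmt8_general γ x₀ Y K hLip
end

section
/- For the open fluid RS-type node with two fluid classes served at rates γ₁, γ₂ (high-priority class 1), the map from (initial levels q(0), cumulative inflows Λ(·)) to the level trajectory q(·) is Lipschitz in sup norm: sup_{t∈[0,T]} ‖q(t) − q'(t)‖ ≤ L(‖q(0) − q'(0)‖ + sup_{t∈[0,T]} ‖Λ(t) − Λ'(t)‖) for a constant L = L(γ₁, γ₂) independent of T. -/
/-!
Both classes are reflected at zero by the Skorokhod map `V ↦ V + U`,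
`U(t) = max{0, -inf_{[0,t]} V}`. Since the infimum over `[0,t]` and `max 0` are 1-Lipschitz for
the sup norm, `U` is 1-Lipschitz and the level `V + U` is 2-Lipschitz in the netput `V`. The
class-1 netputs differ by at most `|Δq₁| + |ΔΛ₁|`; the class-2 netputs by
`|Δq₂| + |ΔΛ₂| + |γ₂| |ΔU₁|`, and `ΔU₁` is already controlled, giving `L = 2 (2 + |γ₂|)`.
The infima are genuine (bounded below) because Lipschitz inflows are continuous on compact
intervals and `U₁` is monotone.
-/

open Real

/-- Unused service capacity of a node with initial level `q0`, cumulative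
inflow `Λ` and cumulative service capacity `S`. -/
noncomputable def fU (q0 : ℝ) (Λ S : ℝ → ℝ) : ℝ → ℝ := fun t =>
  max 0 (-(sInf ((fun s => q0 + Λ s - S s) '' Set.Icc 0 t)))

/-- Fluid level of a node with initial level `q0`, cumulative inflow `Λ` and
cumulative service capacity `S`. -/
noncomputable def fQ (q0 : ℝ) (Λ S : ℝ → ℝ) : ℝ → ℝ := fun t =>
  (q0 + Λ t - S t) + fU q0 Λ S t

section InfStability

variable {α : Type*} {s : Set α} {f g : α → ℝ} {D : ℝ}

theorem sInf_image_le_sInf_image_add (hs : s.Nonempty) (hf : BddBelow (f '' s))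
    (h : ∀ x ∈ s, f x ≤ g x + D) : sInf (f '' s) ≤ sInf (g '' s) + D := by
  rw [← sub_le_iff_le_add]
  refine le_csInf (hs.image g) ?_
  rintro _ ⟨x, hx, rfl⟩
  linarith [csInf_le hf ⟨x, hx, rfl⟩, h x hx]

theorem abs_sInf_image_sub_sInf_image_le (hs : s.Nonempty) (hf : BddBelow (f '' s))
    (hg : BddBelow (g '' s)) (h : ∀ x ∈ s, |f x - g x| ≤ D) :
    |sInf (f '' s) - sInf (g '' s)| ≤ D := by
  refine abs_sub_le_iff.mpr ⟨?_, ?_⟩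
  · have := sInf_image_le_sInf_image_add (g := g) (D := D) hs hf fun x hx => by
      linarith [(abs_le.mp (h x hx)).2]
    linarith
  · have := sInf_image_le_sInf_image_add (g := f) (D := D) hs hg fun x hx => by
      linarith [(abs_le.mp (h x hx)).1]
    linarith

end InfStability

/-- `fU q0 Λ S` is definitionally `skorokhodRegulator (fun s => q0 + Λ s - S s)`, so the
regulator lemmas apply to `fU` and `fQ` by unfolding. -/
noncomputable def skorokhodRegulator (V : ℝ → ℝ) (t : ℝ) : ℝ :=
  max 0 (-sInf (V '' Set.Icc 0 t))

section SkorokhodRegulator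

variable {V V' : ℝ → ℝ} {s t D : ℝ}

theorem skorokhodRegulator_nonneg : 0 ≤ skorokhodRegulator V t := le_max_left _ _

theorem skorokhodRegulator_le_of_le (hb : BddBelow (V '' Set.Icc 0 t)) (hs : 0 ≤ s)
    (hst : s ≤ t) : skorokhodRegulator V s ≤ skorokhodRegulator V t := by
  refine max_le_max le_rfl (neg_le_neg (csInf_le_csInf hb ?_ ?_))
  · exact (Set.nonempty_Icc.mpr hs).image V
  · exact Set.image_mono (Set.Icc_subset_Icc le_rfl hst)

theorem abs_skorokhodRegulator_sub_le (ht : 0 ≤ t) (hb : BddBelow (V '' Set.Icc 0 t))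
    (hb' : BddBelow (V' '' Set.Icc 0 t)) (h : ∀ s ∈ Set.Icc 0 t, |V s - V' s| ≤ D) :
    |skorokhodRegulator V t - skorokhodRegulator V' t| ≤ D := by
  unfold skorokhodRegulator
  calc |max 0 (-sInf (V '' Set.Icc 0 t)) - max 0 (-sInf (V' '' Set.Icc 0 t))|
      ≤ |-sInf (V '' Set.Icc 0 t) - -sInf (V' '' Set.Icc 0 t)| := by
        simpa only [max_comm (0 : ℝ)] using abs_max_sub_max_le_abs _ _ (0 : ℝ)
    _ = |sInf (V '' Set.Icc 0 t) - sInf (V' '' Set.Icc 0 t)| := by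
        rw [neg_sub_neg, abs_sub_comm]
    _ ≤ D := abs_sInf_image_sub_sInf_image_le (Set.nonempty_Icc.mpr ht) hb hb' h

theorem abs_reflection_sub_reflection_le (ht : 0 ≤ t) (hb : BddBelow (V '' Set.Icc 0 t))
    (hb' : BddBelow (V' '' Set.Icc 0 t)) (h : ∀ s ∈ Set.Icc 0 t, |V s - V' s| ≤ D) :
    |(V t + skorokhodRegulator V t) - (V' t + skorokhodRegulator V' t)| ≤ 2 * D := by
  have hV := h t ⟨ht, le_rfl⟩
  have hU := abs_skorokhodRegulator_sub_le ht hb hb' h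
  calc _ = |(V t - V' t) + (skorokhodRegulator V t - skorokhodRegulator V' t)| := by ring_nf
    _ ≤ _ := (abs_add_le _ _).trans (by linarith)

end SkorokhodRegulator

theorem abs_netput_sub_netput_le (q q' a a' b b' : ℝ) :
    |(q + a - b) - (q' + a' - b')| ≤ |q - q'| + |a - a'| + |b - b'| :=
  calc |(q + a - b) - (q' + a' - b')| = |((q - q') + (a - a')) - (b - b')| := by ring_nf
    _ ≤ |q - q'| + |a - a'| + |b - b'| :=
      (abs_sub _ _).trans (add_le_add_left (abs_add_le _ _) _)

section Node

variable {q q' : ℝ} {Λ Λ' S S' : ℝ → ℝ} {t D : ℝ}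

theorem abs_fU_sub_fU_le (ht : 0 ≤ t)
    (hb : BddBelow ((fun s => q + Λ s - S s) '' Set.Icc 0 t))
    (hb' : BddBelow ((fun s => q' + Λ' s - S' s) '' Set.Icc 0 t))
    (h : ∀ s ∈ Set.Icc 0 t, |q - q'| + |Λ s - Λ' s| + |S s - S' s| ≤ D) :
    |fU q Λ S t - fU q' Λ' S' t| ≤ D :=
  abs_skorokhodRegulator_sub_le ht hb hb' fun s hs =>
    (abs_netput_sub_netput_le _ _ _ _ _ _).trans (h s hs)

theorem abs_fQ_sub_fQ_le (ht : 0 ≤ t)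
    (hb : BddBelow ((fun s => q + Λ s - S s) '' Set.Icc 0 t))
    (hb' : BddBelow ((fun s => q' + Λ' s - S' s) '' Set.Icc 0 t))
    (h : ∀ s ∈ Set.Icc 0 t, |q - q'| + |Λ s - Λ' s| + |S s - S' s| ≤ D) :
    |fQ q Λ S t - fQ q' Λ' S' t| ≤ 2 * D :=
  abs_reflection_sub_reflection_le ht hb hb' fun s hs =>
    (abs_netput_sub_netput_le _ _ _ _ _ _).trans (h s hs)

theorem bddBelow_netput_sub_mul_fU {q1 : ℝ} {Λ1 S1 : ℝ → ℝ} (c : ℝ)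
    (hb : BddBelow ((fun s => q + Λ s) '' Set.Icc 0 t))
    (hb1 : BddBelow ((fun s => q1 + Λ1 s - S1 s) '' Set.Icc 0 t)) :
    BddBelow ((fun s => q + Λ s - c * fU q1 Λ1 S1 s) '' Set.Icc 0 t) := by
  obtain ⟨m, hm⟩ := hb
  refine ⟨m - |c| * fU q1 Λ1 S1 t, ?_⟩
  rintro _ ⟨s, hs, rfl⟩
  have hU : c * fU q1 Λ1 S1 s ≤ |c| * fU q1 Λ1 S1 t :=
    calc c * fU q1 Λ1 S1 s ≤ |c| * fU q1 Λ1 S1 s :=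
          mul_le_mul_of_nonneg_right (le_abs_self c) skorokhodRegulator_nonneg
      _ ≤ |c| * fU q1 Λ1 S1 t :=
          mul_le_mul_of_nonneg_left (skorokhodRegulator_le_of_le hb1 hs.1 hs.2) (abs_nonneg c)
  linarith [hm ⟨s, hs, rfl⟩]

end Node

namespace PriorityNode

variable (γ₁ γ₂ : ℝ) {q1 q2 q1' q2' : ℝ} {Λ1 Λ2 Λ1' Λ2' : ℝ → ℝ} {t D : ℝ}

theorem abs_fU_high_sub_le (hΛ1 : Continuous Λ1) (hΛ1' : Continuous Λ1') (ht : 0 ≤ t)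
    (h : ∀ s ∈ Set.Icc 0 t, |q1 - q1'| + |Λ1 s - Λ1' s| ≤ D) :
    |fU q1 Λ1 (fun u => γ₁ * u) t - fU q1' Λ1' (fun u => γ₁ * u) t| ≤ D :=
  abs_fU_sub_fU_le ht (isCompact_Icc.bddBelow_image (by fun_prop))
    (isCompact_Icc.bddBelow_image (by fun_prop)) fun s hs => by simpa using h s hs

theorem abs_fQ_high_sub_le (hΛ1 : Continuous Λ1) (hΛ1' : Continuous Λ1') (ht : 0 ≤ t)
    (h : ∀ s ∈ Set.Icc 0 t, |q1 - q1'| + |Λ1 s - Λ1' s| ≤ D) :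
    |fQ q1 Λ1 (fun u => γ₁ * u) t - fQ q1' Λ1' (fun u => γ₁ * u) t| ≤ 2 * D :=
  abs_fQ_sub_fQ_le ht (isCompact_Icc.bddBelow_image (by fun_prop))
    (isCompact_Icc.bddBelow_image (by fun_prop)) fun s hs => by simpa using h s hs

theorem abs_fQ_low_sub_le (hΛ1 : Continuous Λ1) (hΛ2 : Continuous Λ2)
    (hΛ1' : Continuous Λ1') (hΛ2' : Continuous Λ2') (ht : 0 ≤ t)
    (h : ∀ s ∈ Set.Icc 0 t, |q1 - q1'| + |q2 - q2'| + (|Λ1 s - Λ1' s| + |Λ2 s - Λ2' s|) ≤ D) :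
    |fQ q2 Λ2 (fun s => γ₂ * fU q1 Λ1 (fun u => γ₁ * u) s) t -
      fQ q2' Λ2' (fun s => γ₂ * fU q1' Λ1' (fun u => γ₁ * u) s) t| ≤ 2 * ((1 + |γ₂|) * D) := by
  refine abs_fQ_sub_fQ_le ht
    (bddBelow_netput_sub_mul_fU γ₂ (isCompact_Icc.bddBelow_image (by fun_prop))
      (isCompact_Icc.bddBelow_image (by fun_prop)))
    (bddBelow_netput_sub_mul_fU γ₂ (isCompact_Icc.bddBelow_image (by fun_prop))
      (isCompact_Icc.bddBelow_image (by fun_prop))) fun s hs => ?_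
  have hU := abs_fU_high_sub_le γ₁ hΛ1 hΛ1' hs.1 fun r hr =>
    (show |q1 - q1'| + |Λ1 r - Λ1' r| ≤ D by
      linarith [h r ⟨hr.1, hr.2.trans hs.2⟩, abs_nonneg (q2 - q2'), abs_nonneg (Λ2 r - Λ2' r)])
  rw [← mul_sub, abs_mul]
  linarith [h s hs, mul_le_mul_of_nonneg_left hU (abs_nonneg γ₂), abs_nonneg (q1 - q1'),
    abs_nonneg (Λ1 s - Λ1' s)]

theorem abs_fQ_sub_add_abs_fQ_sub_le (hΛ1 : Continuous Λ1) (hΛ2 : Continuous Λ2)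
    (hΛ1' : Continuous Λ1') (hΛ2' : Continuous Λ2') (ht : 0 ≤ t)
    (h : ∀ s ∈ Set.Icc 0 t, |q1 - q1'| + |q2 - q2'| + (|Λ1 s - Λ1' s| + |Λ2 s - Λ2' s|) ≤ D) :
    |fQ q1 Λ1 (fun u => γ₁ * u) t - fQ q1' Λ1' (fun u => γ₁ * u) t| +
      |fQ q2 Λ2 (fun s => γ₂ * fU q1 Λ1 (fun u => γ₁ * u) s) t -
        fQ q2' Λ2' (fun s => γ₂ * fU q1' Λ1' (fun u => γ₁ * u) s) t| ≤ 2 * (2 + |γ₂|) * D := by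
  have hQ1 := abs_fQ_high_sub_le γ₁ hΛ1 hΛ1' ht fun s hs =>
    (show |q1 - q1'| + |Λ1 s - Λ1' s| ≤ D by
      linarith [h s hs, abs_nonneg (q2 - q2'), abs_nonneg (Λ2 s - Λ2' s)])
  have hQ2 := abs_fQ_low_sub_le γ₁ γ₂ hΛ1 hΛ2 hΛ1' hΛ2' ht h
  linarith

end PriorityNode

theorem stmt18_general (γ₁ γ₂ : ℝ) :
    ∃ L : ℝ, 0 < L ∧
      ∀ T : ℝ, 0 < T →
      ∀ (q10 q20 q10' q20' : ℝ) (Λ1 Λ2 Λ1' Λ2' : ℝ → ℝ) (K : NNReal),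
        0 ≤ q10 → 0 ≤ q20 → 0 ≤ q10' → 0 ≤ q20' →
        MonotoneOn Λ1 (Set.Icc 0 T) → MonotoneOn Λ2 (Set.Icc 0 T) →
        MonotoneOn Λ1' (Set.Icc 0 T) → MonotoneOn Λ2' (Set.Icc 0 T) →
        LipschitzWith K Λ1 → LipschitzWith K Λ2 →
        LipschitzWith K Λ1' → LipschitzWith K Λ2' →
        Λ1 0 = 0 → Λ2 0 = 0 → Λ1' 0 = 0 → Λ2' 0 = 0 →
        ∀ t ∈ Set.Icc (0:ℝ) T,
          |fQ q10 Λ1 (fun s => γ₁ * s) t - fQ q10' Λ1' (fun s => γ₁ * s) t| +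
          |fQ q20 Λ2 (fun s => γ₂ * fU q10 Λ1 (fun u => γ₁ * u) s) t -
            fQ q20' Λ2' (fun s => γ₂ * fU q10' Λ1' (fun u => γ₁ * u) s) t|
          ≤ L * ((|q10 - q10'| + |q20 - q20'|) +
              sSup ((fun s => |Λ1 s - Λ1' s| + |Λ2 s - Λ2' s|) ''
                Set.Icc (0:ℝ) T)) := by
  refine ⟨2 * (2 + |γ₂|), by positivity, ?_⟩
  intro T _ q10 q20 q10' q20' Λ1 Λ2 Λ1' Λ2' K _ _ _ _ _ _ _ _ hL1 hL2 hL1' hL2' _ _ _ _ t ht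
  have hc1 := hL1.continuous
  have hc2 := hL2.continuous
  have hc1' := hL1'.continuous
  have hc2' := hL2'.continuous
  refine PriorityNode.abs_fQ_sub_add_abs_fQ_sub_le γ₁ γ₂ hc1 hc2 hc1' hc2' ht.1 fun s hs => ?_
  have hsup : |Λ1 s - Λ1' s| + |Λ2 s - Λ2' s| ≤
      sSup ((fun s => |Λ1 s - Λ1' s| + |Λ2 s - Λ2' s|) '' Set.Icc (0:ℝ) T) :=
    le_csSup (isCompact_Icc.bddAbove_image (by fun_prop : Continuous _).continuousOn)
      ⟨s, Set.Icc_subset_Icc le_rfl ht.2 hs, rfl⟩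
  linarith

/-- Lipschitz continuity of the two-class priority fluid node (Lemma L2):
there is `L = L(γ₁,γ₂)` such that, uniformly in the horizon `T`, the ℓ¹
distance of the level trajectories is bounded by `L` times the sum of the ℓ¹
distance of the initial levels and the sup-norm distance of the cumulative
inflows. Class 1 has priority; class 2 uses the leftover capacity `γ₂ U₁`. -/
theorem stmt18 (γ₁ γ₂ : ℝ) (h1 : 0 < γ₁) (h2 : 0 < γ₂) :
    ∃ L : ℝ, 0 < L ∧
      ∀ T : ℝ, 0 < T →
      ∀ (q10 q20 q10' q20' : ℝ) (Λ1 Λ2 Λ1' Λ2' : ℝ → ℝ) (K : NNReal),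
        0 ≤ q10 → 0 ≤ q20 → 0 ≤ q10' → 0 ≤ q20' →
        MonotoneOn Λ1 (Set.Icc 0 T) → MonotoneOn Λ2 (Set.Icc 0 T) →
        MonotoneOn Λ1' (Set.Icc 0 T) → MonotoneOn Λ2' (Set.Icc 0 T) →
        LipschitzWith K Λ1 → LipschitzWith K Λ2 →
        LipschitzWith K Λ1' → LipschitzWith K Λ2' →
        Λ1 0 = 0 → Λ2 0 = 0 → Λ1' 0 = 0 → Λ2' 0 = 0 →
        ∀ t ∈ Set.Icc (0:ℝ) T,
          |fQ q10 Λ1 (fun s => γ₁ * s) t - fQ q10' Λ1' (fun s => γ₁ * s) t| +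
          |fQ q20 Λ2 (fun s => γ₂ * fU q10 Λ1 (fun u => γ₁ * u) s) t -
            fQ q20' Λ2' (fun s => γ₂ * fU q10' Λ1' (fun u => γ₁ * u) s) t|
          ≤ L * ((|q10 - q10'| + |q20 - q20'|) +
              sSup ((fun s => |Λ1 s - Λ1' s| + |Λ2 s - Λ2' s|) ''
                Set.Icc (0:ℝ) T)) :=
  stmt18_general γ₁ γ₂
end

section
/- Work-conservation implies stability of the empty state: consider a multi-class work-conserving fluid node with service rates γᵢ > 0, inflow rate functions yᵢ(t) ≥ 0, and levels x̄(t) evolving so that when ‖x̄(t)‖ > 0 the outflow rates zᵢ(t) satisfy Σᵢ zᵢ(t)/γᵢ = 1, and when x̄(t) = 0 then zᵢ(t) = yᵢ(t). If x̄(0) = 0 and the workload rate v(t) = Σᵢ yᵢ(t)/γᵢ satisfies v(t) ≤ 1 for almost all t ≥ 0, then x̄(t) = 0 for all t ≥ 0. -/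
open Real MeasureTheory

/-!
The workload `W(t) = Σᵢ xᵢ(t)/γᵢ` is the integral of its drift `Σᵢ (yᵢ - zᵢ)/γᵢ`. While the node
is busy the drift is `v - 1 ≤ 0`, and while it is empty the outflow equals the inflow, so the drift
vanishes. Hence `0 ≤ W(t) ≤ W(0) = 0`, and since all levels are nonnegative they all vanish.
-/

open Finset

section Workload

variable {ι : Type*} [Fintype ι]

noncomputable def workload (γ u : ι → ℝ) : ℝ := ∑ i, u i / γ i

lemma workload_sub (γ u v : ι → ℝ) : workload γ (u - v) = workload γ u - workload γ v := by
  simp only [workload, Pi.sub_apply, sub_div, sum_sub_distrib]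

lemma workload_nonneg {γ u : ι → ℝ} (hγ : ∀ i, 0 ≤ γ i) (hu : 0 ≤ u) : 0 ≤ workload γ u :=
  sum_nonneg fun i _ => div_nonneg (hu i) (hγ i)

lemma eq_zero_of_workload_eq_zero {γ u : ι → ℝ} (hγ : ∀ i, 0 < γ i) (hu : 0 ≤ u)
    (h : workload γ u = 0) : u = 0 := by
  funext i
  have hi := (sum_eq_zero_iff_of_nonneg fun j _ => div_nonneg (hu j) (hγ j).le).mp h i (mem_univ i)
  simpa [(hγ i).ne'] using hi

lemma workload_sub_nonpos_of_workConserving {γ y z : ι → ℝ} {level : ℝ} (hlevel : 0 ≤ level)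
    (hbusy : 0 < level → workload γ z = 1) (hidle : level = 0 → z = y)
    (hload : workload γ y ≤ 1) : workload γ (y - z) ≤ 0 := by
  rw [workload_sub]
  rcases hlevel.lt_or_eq with hpos | hzero
  · linarith [hbusy hpos]
  · rw [hidle hzero.symm, sub_self]

lemma workload_intervalIntegral_sub {γ : ι → ℝ} {y z : ℝ → ι → ℝ} {a b : ℝ}
    (hy : ∀ i, IntervalIntegrable (fun s => y s i) volume a b)
    (hz : ∀ i, IntervalIntegrable (fun s => z s i) volume a b) :
    workload γ (fun i => (∫ s in a..b, y s i) - ∫ s in a..b, z s i) =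
      ∫ s in a..b, workload γ (y s - z s) := by
  simp only [workload, Pi.sub_apply]
  rw [intervalIntegral.integral_finsetSum fun i _ => ((hy i).sub (hz i)).div_const (γ i)]
  refine sum_congr rfl fun i _ => ?_
  rw [intervalIntegral.integral_div, intervalIntegral.integral_sub (hy i) (hz i)]

end Workload

theorem stmt19_general (n : ℕ) (γ : Fin n → ℝ) (hγ : ∀ i, 0 < γ i)
    (x Y Z y z : ℝ → Fin n → ℝ)
    (hx0 : ∀ i, x 0 i = 0)
    (hxnn : ∀ t : ℝ, 0 ≤ t → ∀ i, 0 ≤ x t i)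
    (hbal : ∀ t : ℝ, 0 ≤ t → ∀ i, x t i = x 0 i + Y t i - Z t i)
    (hyint : ∀ i, ∀ t : ℝ, 0 ≤ t → IntervalIntegrable (fun s => y s i) volume 0 t)
    (hzint : ∀ i, ∀ t : ℝ, 0 ≤ t → IntervalIntegrable (fun s => z s i) volume 0 t)
    (hY : ∀ i, ∀ t : ℝ, 0 ≤ t → Y t i = ∫ s in (0:ℝ)..t, y s i)
    (hZ : ∀ i, ∀ t : ℝ, 0 ≤ t → Z t i = ∫ s in (0:ℝ)..t, z s i)
    (hwc : ∀ᵐ t ∂(volume.restrict (Set.Ici (0:ℝ))),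
      ((0 < ∑ i, x t i) → (∑ i, z t i / γ i) = 1) ∧
      ((∑ i, x t i) = 0 → ∀ i, z t i = y t i))
    (hload : ∀ᵐ t ∂(volume.restrict (Set.Ici (0:ℝ))), (∑ i, y t i / γ i) ≤ 1) :
    ∀ t : ℝ, 0 ≤ t → ∀ i, x t i = 0 := by
  intro t ht
  have hdrift : ∀ᵐ s ∂(volume.restrict (Set.Ici (0:ℝ))), workload γ (y s - z s) ≤ 0 := by
    filter_upwards [hwc, hload, ae_restrict_mem measurableSet_Ici] with s ⟨hbusy, hidle⟩ hls hs
    exact workload_sub_nonpos_of_workConserving (sum_nonneg fun i _ => hxnn s hs i) hbusy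
      (fun h => funext (hidle h)) hls
  have hxt : x t = fun i => (∫ s in (0:ℝ)..t, y s i) - ∫ s in (0:ℝ)..t, z s i := by
    funext i
    rw [hbal t ht i, hx0 i, hY i t ht, hZ i t ht, zero_add]
  have hWt : workload γ (x t) ≤ 0 := by
    rw [hxt, workload_intervalIntegral_sub (fun i => hyint i t ht) (fun i => hzint i t ht),
      ← neg_nonneg, ← intervalIntegral.integral_neg]
    refine intervalIntegral.integral_nonneg_of_ae_restrict ht ?_
    filter_upwards [ae_restrict_of_ae_restrict_of_subset Set.Icc_subset_Ici_self hdrift]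
      with s hs using neg_nonneg.mpr hs
  have hW0 := le_antisymm hWt (workload_nonneg (fun i => (hγ i).le) (hxnn t ht))
  exact congrFun (eq_zero_of_workload_eq_zero hγ (hxnn t ht) hW0)

/-- Work-conservation implies stability of the empty state (Proposition PP1):
if the node starts empty and the workload rate `v(t) = Σᵢ yᵢ(t)/γᵢ` is at most
`1` almost everywhere, then the node stays empty forever. -/
theorem stmt19 (n : ℕ) (γ : Fin n → ℝ) (hγ : ∀ i, 0 < γ i)
    (x Y Z y z : ℝ → Fin n → ℝ)
    (hx0 : ∀ i, x 0 i = 0)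
    (hxnn : ∀ t : ℝ, 0 ≤ t → ∀ i, 0 ≤ x t i)
    (hbal : ∀ t : ℝ, 0 ≤ t → ∀ i, x t i = x 0 i + Y t i - Z t i)
    (hyint : ∀ i, ∀ t : ℝ, 0 ≤ t → IntervalIntegrable (fun s => y s i) volume 0 t)
    (hzint : ∀ i, ∀ t : ℝ, 0 ≤ t → IntervalIntegrable (fun s => z s i) volume 0 t)
    (hY : ∀ i, ∀ t : ℝ, 0 ≤ t → Y t i = ∫ s in (0:ℝ)..t, y s i)
    (hZ : ∀ i, ∀ t : ℝ, 0 ≤ t → Z t i = ∫ s in (0:ℝ)..t, z s i)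
    (hynn : ∀ᵐ t ∂(volume.restrict (Set.Ici (0:ℝ))), ∀ i, 0 ≤ y t i)
    (hznn : ∀ᵐ t ∂(volume.restrict (Set.Ici (0:ℝ))), ∀ i, 0 ≤ z t i)
    (hwc : ∀ᵐ t ∂(volume.restrict (Set.Ici (0:ℝ))),
      ((0 < ∑ i, x t i) → (∑ i, z t i / γ i) = 1) ∧
      ((∑ i, x t i) = 0 → ∀ i, z t i = y t i))
    (hload : ∀ᵐ t ∂(volume.restrict (Set.Ici (0:ℝ))), (∑ i, y t i / γ i) ≤ 1) :
    ∀ t : ℝ, 0 ≤ t → ∀ i, x t i = 0 :=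
  stmt19_general n γ hγ x Y Z y z hx0 hxnn hbal hyint hzint hY hZ hwc hload
end
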